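/- arXiv:1504.07583 — 2 statements merged into one kernel-verified Lean document; each statement's English description precedes it below -/
import Mathlib

section
/- Let σ₀ be a permutation of {1,…,N}, s₀ = A∘σ₀ ∈ S, Y* ∈ H, σ* a permutation minimizing σ ↦ ‖Y*∘σ − s₀‖ over σ ∈ S_N, X* = Y*∘σ*, and t* > 0. Define X : [0,t*] → H by X_t = s₀ + (t/t*)·(X* − s₀). Then for every t ∈ (0,t*]: (i) s₀ is a nearest point of X_t in S, i.e. ‖X_t − s₀‖ ≤ ‖X_t − s‖ for all s ∈ S, and (ii) t·(dX_t/dt) = X_t − s₀; that is, the curve satisfies the self-consistent ordinary differential equation t·dX_t/dt = X_t − π(X_t), where π(X_t) denotes a nearest point of X_t in S. -/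
/-- The phase space `H = (ℝ^d)^N` with norm `‖X‖² = ∑ₐ |X(a)|²`. -/
abbrev Hsp (N d : ℕ) := PiLp 2 (fun _ : Fin N => EuclideanSpace ℝ (Fin d))

/-- The inclusion of plain maps `{1,…,N} → ℝ^d` into `H`. -/
def toH {N d : ℕ} (X : Fin N → EuclideanSpace ℝ (Fin d)) : Hsp N d := WithLp.toLp 2 X

/-- Composition `X ∘ σ` of an element of `H` with a permutation. -/
def permComp {N d : ℕ} (X : Hsp N d) (σ : Equiv.Perm (Fin N)) : Hsp N d :=
  WithLp.toLp 2 (fun a => X (σ a))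

/-! Permuting coordinates is an isometry of `H`, so optimality of `σ⋆` for matching `Y⋆` to
`s₀` says that `s₀` is a nearest point of `X⋆ = Y⋆∘σ⋆` in `S`. By the triangle inequality a
nearest point of `x` stays nearest for every point of the segment from it to `x`. The curve is
affine in `t`, so `t · dX/dt = (t/t⋆)(X⋆ − s₀) = X_t − s₀`. -/

theorem norm_add_smul_sub_le_of_norm_sub_le {E : Type*} [SeminormedAddCommGroup E]
    [NormedSpace ℝ E] {p q x : E} (h : ‖x - p‖ ≤ ‖x - q‖) {θ : ℝ} (hθ₀ : 0 ≤ θ) (hθ₁ : θ ≤ 1) :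
    ‖p + θ • (x - p) - p‖ ≤ ‖p + θ • (x - p) - q‖ := by
  set y := p + θ • (x - p)
  have hyp : ‖y - p‖ = θ * ‖x - p‖ := by
    rw [add_sub_cancel_left, norm_smul, Real.norm_of_nonneg hθ₀]
  have hxy : ‖x - y‖ = (1 - θ) * ‖x - p‖ := by
    rw [show x - y = (1 - θ) • (x - p) by simp only [y, sub_smul, one_smul]; abel,
      norm_smul, Real.norm_of_nonneg (sub_nonneg.2 hθ₁)]
  have htri : ‖x - p‖ ≤ ‖x - y‖ + ‖y - q‖ := h.trans (norm_sub_le_norm_sub_add_norm_sub x y q)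
  rw [hyp]
  linarith

theorem permComp_eq_piLpCongrLeft {N d : ℕ} (X : Hsp N d) (σ : Equiv.Perm (Fin N)) :
    permComp X σ = LinearIsometryEquiv.piLpCongrLeft 2 ℝ _ σ.symm X := rfl

theorem norm_permComp_sub_permComp {N d : ℕ} (X Z : Hsp N d) (σ : Equiv.Perm (Fin N)) :
    ‖permComp X σ - permComp Z σ‖ = ‖X - Z‖ := by
  rw [permComp_eq_piLpCongrLeft, permComp_eq_piLpCongrLeft, ← map_sub,
    LinearIsometryEquiv.norm_map]

theorem permComp_permComp {N d : ℕ} (X : Hsp N d) (σ τ : Equiv.Perm (Fin N)) :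
    permComp (permComp X σ) τ = permComp X (σ * τ) := rfl

theorem norm_sub_permComp_le_of_forall {N d : ℕ} {Y Z : Hsp N d}
    {σ₀ σstar : Equiv.Perm (Fin N)}
    (hmin : ∀ σ, ‖permComp Y σstar - permComp Z σ₀‖ ≤ ‖permComp Y σ - permComp Z σ₀‖)
    (σ : Equiv.Perm (Fin N)) :
    ‖permComp Y σstar - permComp Z σ₀‖ ≤ ‖permComp Y σstar - permComp Z σ‖ := by
  calc ‖permComp Y σstar - permComp Z σ₀‖
      ≤ ‖permComp Y (σstar * (σ⁻¹ * σ₀)) - permComp Z σ₀‖ := hmin _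
    _ = ‖permComp Y σstar - permComp Z σ‖ := by
      rw [← norm_permComp_sub_permComp (permComp Y σstar) (permComp Z σ) (σ⁻¹ * σ₀),
        permComp_permComp, permComp_permComp, mul_inv_cancel_left]

theorem smul_deriv_add_div_smul {E : Type*} [NormedAddCommGroup E] [NormedSpace ℝ E]
    (p v : E) (T t : ℝ) :
    t • deriv (fun u : ℝ => p + (u / T) • v) t = (t / T) • v := by
  have hderiv : HasDerivAt (fun u : ℝ => p + (u / T) • v) (T⁻¹ • v) t := by
    simpa using (((hasDerivAt_id t).div_const T).smul_const v).const_add p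
  rw [hderiv.deriv, smul_smul, div_eq_mul_inv]

theorem stmt3_general {N d : ℕ} (A : Fin N → EuclideanSpace ℝ (Fin d))
    (σ₀ σstar : Equiv.Perm (Fin N)) (Ystar : Hsp N d)
    (s₀ : Hsp N d) (hs₀ : s₀ = permComp (toH A) σ₀)
    (Xstar : Hsp N d) (hXstar : Xstar = permComp Ystar σstar)
    (hmin : ∀ σ : Equiv.Perm (Fin N), ‖Xstar - s₀‖ ≤ ‖permComp Ystar σ - s₀‖)
    (tstar : ℝ)
    (X : ℝ → Hsp N d) (hX : ∀ t : ℝ, X t = s₀ + (t / tstar) • (Xstar - s₀)) :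
    ∀ t ∈ Set.Ioc (0 : ℝ) tstar,
      (∀ s ∈ {Z : Hsp N d | ∃ σ : Equiv.Perm (Fin N), Z = permComp (toH A) σ},
        ‖X t - s₀‖ ≤ ‖X t - s‖)
      ∧ t • deriv X t = X t - s₀ := by
  rintro t ⟨ht₀, ht⟩
  obtain rfl : X = fun u => s₀ + (u / tstar) • (Xstar - s₀) := funext hX
  subst hs₀ hXstar
  refine ⟨?_, ?_⟩
  · rintro _ ⟨σ, rfl⟩
    exact norm_add_smul_sub_le_of_norm_sub_le (norm_sub_permComp_le_of_forall hmin σ)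
      (div_nonneg ht₀.le (ht₀.le.trans ht)) (div_le_one_of_le₀ ht (ht₀.le.trans ht))
  · rw [smul_deriv_add_div_smul, add_sub_cancel_left]

/-- Proposition 2.1: the constant-speed geodesic
`X_t = s₀ + (t/t*)·(X* − s₀)` from `s₀ = A∘σ₀` to the optimally permuted endpoint
`X* = Y*∘σ*` has `s₀` as nearest point in `S = {A∘σ : σ ∈ S_N}` for all
`t ∈ (0,t*]`, and it satisfies the self-consistent ODE `t·dX/dt = X − π(X)`. -/
theorem stmt3 {N d : ℕ} (A : Fin N → EuclideanSpace ℝ (Fin d))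
    (hA : Function.Injective A)
    (σ₀ σstar : Equiv.Perm (Fin N)) (Ystar : Hsp N d)
    (s₀ : Hsp N d) (hs₀ : s₀ = permComp (toH A) σ₀)
    (Xstar : Hsp N d) (hXstar : Xstar = permComp Ystar σstar)
    (hmin : ∀ σ : Equiv.Perm (Fin N), ‖Xstar - s₀‖ ≤ ‖permComp Ystar σ - s₀‖)
    (tstar : ℝ) (htstar : 0 < tstar)
    (X : ℝ → Hsp N d) (hX : ∀ t : ℝ, X t = s₀ + (t / tstar) • (Xstar - s₀)) :
    ∀ t ∈ Set.Ioc (0 : ℝ) tstar,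
      (∀ s ∈ {Z : Hsp N d | ∃ σ : Equiv.Perm (Fin N), Z = permComp (toH A) σ},
        ‖X t - s₀‖ ≤ ‖X t - s‖)
      ∧ t • deriv X t = X t - s₀ :=
  stmt3_general A σ₀ σstar Ystar s₀ hs₀ Xstar hXstar hmin tstar X hX
end

section
/- Let E be a finite-dimensional real inner product space and S ⊆ E a nonempty finite set. Define Φ : E → ℝ by Φ(Y) = (1/2)·dist(Y,S)². If Φ is differentiable at a point Y ∈ E, then Y has a unique nearest point s* in S (i.e. s* is the unique element of S with ‖Y − s*‖ = dist(Y,S)) and ∇Φ(Y) = Y − s*. -/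
/-!
If `s ∈ S` is a nearest point to `Y`, the smooth function `Z ↦ ½‖Z - s‖²` lies above
`Φ = ½ dist(·, S)²` and touches it at `Y`, so at a point where `Φ` is differentiable the two
gradients agree: `∇Φ(Y) = Y - s`. Nearest points exist since `S` is finite, and any two of them
give the same gradient, hence coincide.
-/

open Filter Metric Topology

theorem HasFDerivAt.eq_of_eventuallyLE_of_eq {E : Type*} [NormedAddCommGroup E]
    [NormedSpace ℝ E] {f g : E → ℝ} {f' g' : E →L[ℝ] ℝ} {x : E}
    (hf : HasFDerivAt f f' x) (hg : HasFDerivAt g g' x) (hle : f ≤ᶠ[𝓝 x] g)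
    (heq : f x = g x) : f' = g' := by
  have hmin : IsLocalMin (g - f) x := by
    filter_upwards [hle] with z hz
    simp only [Pi.sub_apply, heq, sub_self, sub_nonneg, hz]
  exact (sub_eq_zero.mp (hmin.hasFDerivAt_eq_zero (hg.sub hf))).symm

theorem half_infDist_sq_le_half_norm_sub_sq {E : Type*} [SeminormedAddCommGroup E] {S : Set E}
    {s : E} (hs : s ∈ S) (Z : E) :
    infDist Z S ^ 2 / 2 ≤ ‖Z - s‖ ^ 2 / 2 := by
  have h : infDist Z S ≤ ‖Z - s‖ := dist_eq_norm Z s ▸ infDist_le_dist_of_mem hs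
  gcongr
  exact infDist_nonneg

section InnerProductSpace

variable {E : Type*} [NormedAddCommGroup E] [InnerProductSpace ℝ E] [CompleteSpace E]

theorem hasGradientAt_half_norm_sub_sq (s Y : E) :
    HasGradientAt (fun Z : E => ‖Z - s‖ ^ 2 / 2) (Y - s) Y := by
  rw [hasGradientAt_iff_hasFDerivAt]
  convert (((hasFDerivAt_id Y).sub_const s).norm_sq).mul_const (2⁻¹ : ℝ) using 2
  · ext Z; simp
  · simp [div_eq_mul_inv]
  · ext Z; simp

theorem hasGradientAt_half_infDist_sq_of_norm_sub_eq_infDist {S : Set E} {s Y : E}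
    (hs : s ∈ S) (hnearest : ‖Y - s‖ = infDist Y S)
    (hdiff : DifferentiableAt ℝ (fun Z => infDist Z S ^ 2 / 2) Y) :
    HasGradientAt (fun Z => infDist Z S ^ 2 / 2) (Y - s) Y := by
  have hsq := (hasGradientAt_half_norm_sub_sq s Y).hasFDerivAt
  have hfderiv := hdiff.hasFDerivAt.eq_of_eventuallyLE_of_eq hsq
    (Eventually.of_forall (half_infDist_sq_le_half_norm_sub_sq hs)) (by rw [hnearest])
  rw [hasGradientAt_iff_hasFDerivAt, ← hfderiv]
  exact hdiff.hasFDerivAt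

end InnerProductSpace

/-- At a point of differentiability of `Φ = ½ dist(·,S)²`, the point `Y` has a unique
nearest point `s*` in the nonempty finite set `S`, and `∇Φ(Y) = Y − s*`. -/
theorem stmt5 {E : Type*} [NormedAddCommGroup E] [InnerProductSpace ℝ E]
    [FiniteDimensional ℝ E]
    (S : Finset E) (hS : S.Nonempty) (Y : E)
    (hdiff : DifferentiableAt ℝ (fun Z => Metric.infDist Z (S : Set E) ^ 2 / 2) Y) :
    ∃ sstar ∈ S,
      ‖Y - sstar‖ = Metric.infDist Y (S : Set E)
      ∧ (∀ s ∈ S, ‖Y - s‖ = Metric.infDist Y (S : Set E) → s = sstar)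
      ∧ gradient (fun Z => Metric.infDist Z (S : Set E) ^ 2 / 2) Y = Y - sstar := by
  obtain ⟨sstar, hsstar, hdist⟩ :=
    S.finite_toSet.isCompact.exists_infDist_eq_dist (Finset.coe_nonempty.mpr hS) Y
  have hnearest : ‖Y - sstar‖ = infDist Y S := by rw [hdist, dist_eq_norm]
  have hgrad := hasGradientAt_half_infDist_sq_of_norm_sub_eq_infDist hsstar hnearest hdiff
  refine ⟨sstar, hsstar, hnearest, fun s hs hs_nearest => ?_, hgrad.gradient⟩
  exact sub_right_injective
    (hgrad.unique (hasGradientAt_half_infDist_sq_of_norm_sub_eq_infDist hs hs_nearest hdiff)).symm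
end
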